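/- arXiv:0801.4458 — 7 statements merged into one kernel-verified Lean document; each statement's English description precedes it below -/
import Mathlib

section
/- Let H and T be closed operators with the same domain D on a separable Hilbert space, let χ and χ̄ be commuting bounded operators with χ² + χ̄² = 1, and suppose (H,T) is a Feshbach pair for χ (i.e. χT ⊆ Tχ, χ̄T ⊆ Tχ̄, both T and H_χ̄ := T + χ̄(H−T)χ̄ are bijections from D ∩ Ran(χ̄) onto Ran(χ̄) with bounded inverse, and χ̄ H_χ̄⁻¹ χ̄ (H−T) χ is bounded). Define F := T + χ(H−T)χ − χ(H−T)χ̄ H_χ̄⁻¹ χ̄ (H−T)χ and Q := χ − χ̄ H_χ̄⁻¹ χ̄ (H−T)χ. Then HQ = χF holds on D. -/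
open scoped InnerProductSpace

/-- **Smooth Feshbach map, identity `H Q = χ F` on `D`.**
`χ, χb` are commuting bounded operators with `χ² + χb² = 1` on a separable
Hilbert space; `(H, T)` is a Feshbach pair for `χ`: `χT ⊆ Tχ`, `χbT ⊆ Tχb`,
both `T` and `H_χb = T + χb W χb` are bijections from `D ∩ Ran χb` onto
`Ran χb` with bounded inverses (`Tinv`, `R`).  With
`F = T + χWχ − χWχb H_χb⁻¹ χb W χ` and `Q = χ − χb H_χb⁻¹ χb W χ`,
one has `H Q = χ F` on `D`. -/
theorem feshbach_HQ_eq_chiF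
    {ℋ : Type*} [NormedAddCommGroup ℋ] [InnerProductSpace ℂ ℋ] [CompleteSpace ℋ]
    [TopologicalSpace.SeparableSpace ℋ]
    (χ χb : ℋ →L[ℂ] ℋ)
    (hcomm : χ ∘L χb = χb ∘L χ)
    (hone : χ ∘L χ + χb ∘L χb = 1)
    (D : Submodule ℂ ℋ)
    (H T : ℋ →ₗ[ℂ] ℋ)
    -- (a)  χT ⊆ Tχ and χbT ⊆ Tχb  (in particular χ, χb leave D invariant)
    (hχD : ∀ x ∈ D, χ x ∈ D)
    (hχbD : ∀ x ∈ D, χb x ∈ D)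
    (hχT : ∀ x ∈ D, χ (T x) = T (χ x))
    (hχbT : ∀ x ∈ D, χb (T x) = T (χb x))
    -- (b)  T is bounded invertible on Ran χb
    (Tinv : ℋ →L[ℂ] ℋ)
    (hTinv₁ : ∀ y ∈ Set.range χb, Tinv y ∈ D ∧ Tinv y ∈ Set.range χb ∧ T (Tinv y) = y)
    (hTinv₂ : ∀ x, x ∈ D → x ∈ Set.range χb → Tinv (T x) = x)
    -- (b)  H_χb = T + χb W χb is bounded invertible on Ran χb, with inverse R
    (R : ℋ →L[ℂ] ℋ)
    (hR₁ : ∀ y ∈ Set.range χb, R y ∈ D ∧ R y ∈ Set.range χb ∧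
        T (R y) + χb ((H - T) (χb (R y))) = y)
    (hR₂ : ∀ x, x ∈ D → x ∈ Set.range χb →
        R (T x + χb ((H - T) (χb x))) = x) :
    -- conclusion:  H (Q x) = χ (F x)  for all x ∈ D
    ∀ x ∈ D,
      H (χ x - χb (R (χb ((H - T) (χ x)))))
        = χ (T x + χ ((H - T) (χ x))
            - χ ((H - T) (χb (R (χb ((H - T) (χ x))))))) := by
  intro x hx
  set W := H - T with hWdef
  have hW : ∀ y, H y = T y + W y := fun y => by
    simp [hWdef]
  set u := χb (W (χ x)) with hu
  set r := R u with hrdef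
  obtain ⟨hrD, hrR, hr3⟩ := hR₁ u ⟨W (χ x), rfl⟩
  have hχχ : ∀ y, χ (χ y) = y - χb (χb y) := by
    intro y
    have h := congrFun (congrArg DFunLike.coe hone) y
    simp only [ContinuousLinearMap.add_apply, ContinuousLinearMap.coe_comp',
      Function.comp_apply, ContinuousLinearMap.one_apply] at h
    exact eq_sub_of_add_eq h
  have hkey : T (χb r) = χb u - χb (χb (W (χb r))) := by
    have h4 := congrArg χb hr3
    rw [map_add, hχbT r hrD] at h4
    exact eq_sub_of_add_eq h4
  rw [map_sub H, hW (χ x), hW (χb r), map_sub χ, map_add χ, hχT x hx,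
    hχχ (W (χ x)), hχχ (W (χb r)), hkey, ← hu]
  abel
end

section
/- With the same Feshbach pair setup, define Q# := χ − χ(H−T)χ̄ H_χ̄⁻¹ χ̄ and F := F_χ(H,T). Then Q# H = F χ on D. -/
open scoped InnerProductSpace

/-- **Smooth Feshbach map, identity `Q# H = F χ` on `D`.**
Same Feshbach pair setup: `(H,T)` a Feshbach pair for commuting bounded
`χ, χb` with `χ² + χb² = 1`, `W = H − T`, `H_χb = T + χb W χb` invertible
on `Ran χb` with bounded inverse `R`.  With
`Q# = χ − χWχb H_χb⁻¹ χb` and `F = F_χ(H,T) = T + χWχ − χWχb H_χb⁻¹ χb Wχ`,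
one has `Q# (H x) = F (χ x)` for all `x ∈ D`. -/
theorem feshbach_QsharpH_eq_Fchi
    {ℋ : Type*} [NormedAddCommGroup ℋ] [InnerProductSpace ℂ ℋ] [CompleteSpace ℋ]
    [TopologicalSpace.SeparableSpace ℋ]
    (χ χb : ℋ →L[ℂ] ℋ)
    (hcomm : χ ∘L χb = χb ∘L χ)
    (hone : χ ∘L χ + χb ∘L χb = 1)
    (D : Submodule ℂ ℋ)
    (H T : ℋ →ₗ[ℂ] ℋ)
    (hχD : ∀ x ∈ D, χ x ∈ D)
    (hχbD : ∀ x ∈ D, χb x ∈ D)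
    (hχT : ∀ x ∈ D, χ (T x) = T (χ x))
    (hχbT : ∀ x ∈ D, χb (T x) = T (χb x))
    (Tinv : ℋ →L[ℂ] ℋ)
    (hTinv₁ : ∀ y ∈ Set.range χb, Tinv y ∈ D ∧ Tinv y ∈ Set.range χb ∧ T (Tinv y) = y)
    (hTinv₂ : ∀ x, x ∈ D → x ∈ Set.range χb → Tinv (T x) = x)
    (R : ℋ →L[ℂ] ℋ)
    (hR₁ : ∀ y ∈ Set.range χb, R y ∈ D ∧ R y ∈ Set.range χb ∧
        T (R y) + χb ((H - T) (χb (R y))) = y)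
    (hR₂ : ∀ x, x ∈ D → x ∈ Set.range χb →
        R (T x + χb ((H - T) (χb x))) = x) :
    ∀ x ∈ D,
      χ (H x) - χ ((H - T) (χb (R (χb (H x)))))
        = T (χ x) + χ ((H - T) (χ (χ x)))
            - χ ((H - T) (χb (R (χb ((H - T) (χ (χ x))))))) := by
  intro x hx
  have hsplit : ∀ y, χ (χ y) + χb (χb y) = y := by
    intro y
    have := congrArg (fun f : ℋ →L[ℂ] ℋ => f y) hone
    simpa using this
  have hWx : (H - T) x = (H - T) (χ (χ x)) + (H - T) (χb (χb x)) := by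
    rw [← map_add, hsplit]
  have hHx : H x = T x + (H - T) x := by
    simp [LinearMap.sub_apply]
  have hχbH : χb (H x)
      = (T (χb x) + χb ((H - T) (χb (χb x)))) + χb ((H - T) (χ (χ x))) := by
    rw [hHx, map_add, hWx, map_add, hχbT x hx]
    abel
  have hRχbH : R (χb (H x)) = χb x + R (χb ((H - T) (χ (χ x)))) := by
    rw [hχbH, map_add, hR₂ (χb x) (hχbD x hx) ⟨x, rfl⟩]
  have hχH : χ (H x)
      = T (χ x) + χ ((H - T) (χ (χ x))) + χ ((H - T) (χb (χb x))) := by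
    rw [hHx, map_add, hWx, map_add, hχT x hx]; abel
  rw [hRχbH, map_add, map_add, map_add, hχH]
  abel
end

section
/- With the same Feshbach pair setup, the identity (χ̄ H_χ̄⁻¹ χ̄) H = 1 − Q_χ χ holds on D, and H (χ̄ H_χ̄⁻¹ χ̄) = 1 − χ Q#_χ holds on all of ℋ. -/
open scoped InnerProductSpace

/-- **Smooth Feshbach map, resolvent-type identities.**
In the smooth Feshbach setup (`(H,T)` a Feshbach pair for commuting bounded
`χ, χb` with `χ² + χb² = 1`, `W = H − T`, `H_χb = T + χbWχb` boundedly
invertible on `Ran χb` with inverse `R`, `Q = χ − χbH_χb⁻¹χbWχ`,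
`Q# = χ − χWχb H_χb⁻¹ χb`):
`(χb H_χb⁻¹ χb) H = 1 − Q χ` holds on `D`, and
`H (χb H_χb⁻¹ χb) = 1 − χ Q#` holds on all of `ℋ`. -/
theorem feshbach_resolvent_identities
    {ℋ : Type*} [NormedAddCommGroup ℋ] [InnerProductSpace ℂ ℋ] [CompleteSpace ℋ]
    [TopologicalSpace.SeparableSpace ℋ]
    (χ χb : ℋ →L[ℂ] ℋ)
    (hcomm : χ ∘L χb = χb ∘L χ)
    (hone : χ ∘L χ + χb ∘L χb = 1)
    (D : Submodule ℂ ℋ)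
    (H T : ℋ →ₗ[ℂ] ℋ)
    (hχD : ∀ x ∈ D, χ x ∈ D)
    (hχbD : ∀ x ∈ D, χb x ∈ D)
    (hχT : ∀ x ∈ D, χ (T x) = T (χ x))
    (hχbT : ∀ x ∈ D, χb (T x) = T (χb x))
    (Tinv : ℋ →L[ℂ] ℋ)
    (hTinv₁ : ∀ y ∈ Set.range χb, Tinv y ∈ D ∧ Tinv y ∈ Set.range χb ∧ T (Tinv y) = y)
    (hTinv₂ : ∀ x, x ∈ D → x ∈ Set.range χb → Tinv (T x) = x)
    (R : ℋ →L[ℂ] ℋ)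
    (hR₁ : ∀ y ∈ Set.range χb, R y ∈ D ∧ R y ∈ Set.range χb ∧
        T (R y) + χb ((H - T) (χb (R y))) = y)
    (hR₂ : ∀ x, x ∈ D → x ∈ Set.range χb →
        R (T x + χb ((H - T) (χb x))) = x) :
    (∀ x ∈ D,
      χb (R (χb (H x)))
        = x - (χ (χ x) - χb (R (χb ((H - T) (χ (χ x))))))) ∧
    (∀ y : ℋ,
      H (χb (R (χb y)))
        = y - χ (χ y - χ ((H - T) (χb (R (χb y)))))) := by
  constructor
  · intro x hx
    have hχbx : χb x ∈ D := hχbD x hx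
    have hχbxR : χb x ∈ Set.range χb := ⟨x, rfl⟩
    have hsum : ∀ z : ℋ, χ (χ z) + χb (χb z) = z := by
      intro z
      have := congrArg (fun f => f z) hone
      simpa using this
    have key : χb (H x)
        = (T (χb x) + χb ((H - T) (χb (χb x)))) + χb ((H - T) (χ (χ x))) := by
      calc χb (H x) = χb (T x) + χb ((H - T) x) := by
            simp [LinearMap.sub_apply, map_sub]
        _ = T (χb x) + (χb ((H - T) (χ (χ x))) + χb ((H - T) (χb (χb x)))) := by
            rw [hχbT x hx]
            congr 1
            conv_lhs => rw [← hsum x]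
            rw [map_add, map_add]
        _ = _ := by abel
    have hR2 : R (T (χb x) + χb ((H - T) (χb (χb x)))) = χb x := hR₂ _ hχbx hχbxR
    have hRkey : R (χb (H x)) = χb x + R (χb ((H - T) (χ (χ x)))) := by
      rw [key, map_add, hR2]
    rw [hRkey, map_add]
    calc χb (χb x) + χb (R (χb ((H - T) (χ (χ x)))))
        = (χ (χ x) + χb (χb x)) - χ (χ x) + χb (R (χb ((H - T) (χ (χ x))))) := by abel
      _ = x - (χ (χ x) - χb (R (χb ((H - T) (χ (χ x)))))) := by rw [hsum x]; abel
  · intro y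
    have hsum : ∀ z : ℋ, χ (χ z) + χb (χb z) = z := by
      intro z
      have := congrArg (fun f => f z) hone
      simpa using this
    obtain ⟨hD, hRan, hEq⟩ := hR₁ (χb y) ⟨y, rfl⟩
    set u := R (χb y) with hu
    have h1 : χb (χb y) = T (χb u) + χb (χb ((H - T) (χb u))) := by
      rw [← hEq, map_add, hχbT u hD]
    calc H (χb u)
        = T (χb u) + χb (χb ((H - T) (χb u))) + χ (χ ((H - T) (χb u))) := by
          have := hsum ((H - T) (χb u))
          have h2 : H (χb u) = T (χb u) + (H - T) (χb u) := by
            simp [LinearMap.sub_apply]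
          rw [h2]; nth_rewrite 1 [← this]; abel
      _ = χb (χb y) + χ (χ ((H - T) (χb u))) := by rw [h1]
      _ = (χ (χ y) + χb (χb y)) - (χ (χ y) - χ (χ ((H - T) (χb u)))) := by abel
      _ = y - χ (χ y - χ ((H - T) (χb u))) := by rw [hsum y, map_sub]
end

section
/- Let (H,T) be a Feshbach pair for χ and set F = F_χ(H,T), Q = Q_χ. Then χ maps ker H into ker F, Q maps ker F into ker H, and the restrictions χ : ker H → ker F and Q : ker F → ker H are linear isomorphisms inverse to each other. -/
open scoped InnerProductSpace

set_option maxHeartbeats 1000000 in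
/-- **Isospectrality of the smooth Feshbach map (kernel isomorphism).**
In the smooth Feshbach setup, with
`F x = T x + χ(W(χ x)) − χ(W(χb(H_χb⁻¹(χb(W(χ x))))))` and
`Q x = χ x − χb(H_χb⁻¹(χb(W(χ x))))`:
`χ` maps `ker H` into `ker F`, `Q` maps `ker F` into `ker H`, and these
restrictions are linear isomorphisms inverse to each other
(`Q ∘ χ = id` on `ker H`, `χ ∘ Q = id` on `ker F`). -/
theorem feshbach_kernel_isomorphism
    {ℋ : Type*} [NormedAddCommGroup ℋ] [InnerProductSpace ℂ ℋ] [CompleteSpace ℋ]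
    [TopologicalSpace.SeparableSpace ℋ]
    (χ χb : ℋ →L[ℂ] ℋ)
    (hcomm : χ ∘L χb = χb ∘L χ)
    (hone : χ ∘L χ + χb ∘L χb = 1)
    (D : Submodule ℂ ℋ)
    (H T : ℋ →ₗ[ℂ] ℋ)
    (hχD : ∀ x ∈ D, χ x ∈ D)
    (hχbD : ∀ x ∈ D, χb x ∈ D)
    (hχT : ∀ x ∈ D, χ (T x) = T (χ x))
    (hχbT : ∀ x ∈ D, χb (T x) = T (χb x))
    (Tinv : ℋ →L[ℂ] ℋ)
    (hTinv₁ : ∀ y ∈ Set.range χb, Tinv y ∈ D ∧ Tinv y ∈ Set.range χb ∧ T (Tinv y) = y)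
    (hTinv₂ : ∀ x, x ∈ D → x ∈ Set.range χb → Tinv (T x) = x)
    (R : ℋ →L[ℂ] ℋ)
    (hR₁ : ∀ y ∈ Set.range χb, R y ∈ D ∧ R y ∈ Set.range χb ∧
        T (R y) + χb ((H - T) (χb (R y))) = y)
    (hR₂ : ∀ x, x ∈ D → x ∈ Set.range χb →
        R (T x + χb ((H - T) (χb x))) = x) :
    (∀ x ∈ D, H x = 0 →
        χ x ∈ D ∧
        T (χ x) + χ ((H - T) (χ (χ x)))
          - χ ((H - T) (χb (R (χb ((H - T) (χ (χ x))))))) = 0) ∧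
    (∀ x ∈ D,
        T x + χ ((H - T) (χ x))
          - χ ((H - T) (χb (R (χb ((H - T) (χ x)))))) = 0 →
        χ x - χb (R (χb ((H - T) (χ x)))) ∈ D ∧
        H (χ x - χb (R (χb ((H - T) (χ x))))) = 0) ∧
    (∀ x ∈ D, H x = 0 →
        χ (χ x) - χb (R (χb ((H - T) (χ (χ x))))) = x) ∧
    (∀ x ∈ D,
        T x + χ ((H - T) (χ x))
          - χ ((H - T) (χb (R (χb ((H - T) (χ x)))))) = 0 →
        χ (χ x - χb (R (χb ((H - T) (χ x))))) = x) := by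
  have hone' : ∀ y, χ (χ y) + χb (χb y) = y := by
    intro y
    have h := DFunLike.congr_fun hone y
    simpa using h
  have hcomm' : ∀ y, χ (χb y) = χb (χ y) := by
    intro y
    have h := DFunLike.congr_fun hcomm y
    simpa using h
  -- Key lemma for the "ker H" side
  have lemA : ∀ x ∈ D, H x = 0 → R (χb ((H - T) (χ (χ x)))) = -(χb x) := by
    intro x hx hH
    have h1 : χ (χ x) = x - χb (χb x) := eq_sub_of_add_eq (hone' x)
    have h2 : χb ((H - T) (χ (χ x)))
        = -(T (χb x) + χb ((H - T) (χb (χb x)))) := by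
      rw [h1, map_sub, map_sub, LinearMap.sub_apply, hH]
      simp [map_sub, hχbT x hx]
      abel
    rw [h2, map_neg, hR₂ (χb x) (hχbD x hx) ⟨x, rfl⟩]
  refine ⟨?_, ?_, ?_, ?_⟩
  · -- χ maps ker H to ker F
    intro x hx hH
    refine ⟨hχD x hx, ?_⟩
    rw [lemA x hx hH]
    have h1 : χ (χ x) = x - χb (χb x) := eq_sub_of_add_eq (hone' x)
    have h2 : χ ((H - T) (χ (χ x)))
        = -T (χ x) - χ ((H - T) (χb (χb x))) := by
      rw [h1, map_sub, LinearMap.sub_apply, hH]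
      simp [map_sub, hχT x hx]
    rw [h2]
    simp [map_neg]
    abel
  · -- Q maps ker F to ker H
    intro x hx hF
    set u := R (χb ((H - T) (χ x))) with hu
    obtain ⟨huD, huR, huEq⟩ := hR₁ (χb ((H - T) (χ x))) ⟨(H - T) (χ x), rfl⟩
    rw [← hu] at huD huR huEq
    refine ⟨D.sub_mem (hχD x hx) (hχbD u huD), ?_⟩
    have hTxh : T x + (χ ((H - T) (χ x)) - χ ((H - T) (χb u))) = 0 := by
      rw [← hF]; abel
    have hTx : T x = -(χ ((H - T) (χ x)) - χ ((H - T) (χb u))) :=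
      eq_neg_of_add_eq_zero_left hTxh
    have hTu : T u = χb ((H - T) (χ x)) - χb ((H - T) (χb u)) :=
      eq_sub_iff_add_eq.mpr huEq
    have hW : (H - T) (χ x) - (H - T) (χb u) = -T (χ x) + T (χb u) := by
      have hdecomp := hone' ((H - T) (χ x) - (H - T) (χb u))
      have hχpart : χ ((H - T) (χ x) - (H - T) (χb u)) = -T x := by
        rw [map_sub, hTx, neg_neg]
      have hχbpart : χb ((H - T) (χ x) - (H - T) (χb u)) = T u := by
        rw [map_sub, hTu]
      calc (H - T) (χ x) - (H - T) (χb u)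
          = χ (χ ((H - T) (χ x) - (H - T) (χb u)))
            + χb (χb ((H - T) (χ x) - (H - T) (χb u))) := (hdecomp).symm
        _ = χ (-T x) + χb (T u) := by rw [hχpart, hχbpart]
        _ = -T (χ x) + T (χb u) := by rw [map_neg, hχT x hx, hχbT u huD]
    have hexp : H (χ x - χb u)
        = T (χ x) - T (χb u) + ((H - T) (χ x) - (H - T) (χb u)) := by
      simp only [LinearMap.sub_apply, map_sub]
      abel
    rw [hexp, hW]
    abel
  · -- Q ∘ χ = id on ker H
    intro x hx hH
    rw [lemA x hx hH, map_neg, sub_neg_eq_add, hone' x]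
  · -- χ ∘ Q = id on ker F
    intro x hx hF
    set u := R (χb ((H - T) (χ x))) with hu
    obtain ⟨huD, huR, huEq⟩ := hR₁ (χb ((H - T) (χ x))) ⟨(H - T) (χ x), rfl⟩
    rw [← hu] at huD huR huEq
    obtain ⟨s, hs⟩ := huR
    set v := χb x + χ u with hv
    have hvD : v ∈ D := D.add_mem (hχbD x hx) (hχD u huD)
    have hvR : v ∈ Set.range χb := by
      refine ⟨x + χ s, ?_⟩
      rw [map_add, ← hcomm' s, hs]
    have hTxh : T x + (χ ((H - T) (χ x)) - χ ((H - T) (χb u))) = 0 := by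
      rw [← hF]; abel
    have hTx : T x = -(χ ((H - T) (χ x)) - χ ((H - T) (χb u))) :=
      eq_neg_of_add_eq_zero_left hTxh
    have hTu : T u = χb ((H - T) (χ x)) - χb ((H - T) (χb u)) :=
      eq_sub_iff_add_eq.mpr huEq
    have hTv : T v = 0 := by
      have h1 : χb (T x) + χ (T u) = 0 := by
        rw [hTx, hTu, map_neg, map_sub, map_sub, ← hcomm', ← hcomm']
        abel
      rw [hv, map_add, ← hχbT x hx, ← hχT u huD, h1]
    have hv0 : v = 0 := by
      have := hTinv₂ v hvD hvR
      rw [hTv] at this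
      simpa using this.symm
    have : χ (χ x - χb u) = x - χb v := by
      rw [map_sub, hcomm' u, hv, map_add]
      have h := hone' x
      have h2 : χ (χ x) = x - χb (χb x) := eq_sub_of_add_eq h
      rw [h2]; abel
    rw [this, hv0]
    simp
end

section
/- Suppose χ, χ̄ are commuting bounded operators with χ² + χ̄² = 1, and H, T are closed operators with common domain D such that: (a') χT ⊆ Tχ and χ̄T ⊆ Tχ̄; (b') T is bounded invertible on Ran χ̄; (c') ‖T⁻¹χ̄Wχ̄‖ < 1, ‖χ̄WT⁻¹χ̄‖ < 1 and T⁻¹χ̄Wχ is bounded, where W = H − T. Then (H,T) is a Feshbach pair for χ; in particular H_χ̄ = T + χ̄Wχ̄ is bounded invertible on Ran χ̄ and χ̄H_χ̄⁻¹χ̄Wχ is bounded. -/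
open scoped InnerProductSpace

/-- **Criterion for Feshbach pairs (Lemma on conditions (a'), (b'), (c')).**
Let `χ, χb` be commuting bounded operators with `χ² + χb² = 1`, and `H, T`
closed operators with common domain `D`, `W = H − T`.  Assume
(a') `χT ⊆ Tχ`, `χbT ⊆ Tχb`;
(b') `T` is bounded invertible on `Ran χb` (inverse `Tinv`);
(c') `‖T⁻¹χbWχb‖ < 1`, `‖χbWT⁻¹χb‖ < 1`, and `T⁻¹χbWχ` is bounded.
Then `(H,T)` is a Feshbach pair for `χ`: `H_χb = T + χbWχb` is bounded
invertible on `Ran χb` (inverse `R`) and `χb H_χb⁻¹ χb W χ` is bounded. -/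
theorem feshbach_pair_criterion
    {ℋ : Type*} [NormedAddCommGroup ℋ] [InnerProductSpace ℂ ℋ] [CompleteSpace ℋ]
    [TopologicalSpace.SeparableSpace ℋ]
    (χ χb : ℋ →L[ℂ] ℋ)
    (hcomm : χ ∘L χb = χb ∘L χ)
    (hone : χ ∘L χ + χb ∘L χb = 1)
    (D : Submodule ℂ ℋ)
    (H T : ℋ →ₗ[ℂ] ℋ)
    -- (a')
    (hχD : ∀ x ∈ D, χ x ∈ D)
    (hχbD : ∀ x ∈ D, χb x ∈ D)
    (hχT : ∀ x ∈ D, χ (T x) = T (χ x))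
    (hχbT : ∀ x ∈ D, χb (T x) = T (χb x))
    -- (b')  T is bounded invertible on Ran χb, with bounded inverse Tinv
    (Tinv : ℋ →L[ℂ] ℋ)
    (hTinv₁ : ∀ y ∈ Set.range χb, Tinv y ∈ D ∧ Tinv y ∈ Set.range χb ∧ T (Tinv y) = y)
    (hTinv₂ : ∀ x, x ∈ D → x ∈ Set.range χb → Tinv (T x) = x)
    -- (c')  ‖T⁻¹ χb W χb‖ < 1, ‖χb W T⁻¹ χb‖ < 1, T⁻¹ χb W χ bounded
    (c₁ : ℝ) (hc₁ : c₁ < 1)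
    (hTWa : ∀ x ∈ D, ‖Tinv (χb ((H - T) (χb x)))‖ ≤ c₁ * ‖x‖)
    (c₂ : ℝ) (hc₂ : c₂ < 1)
    (hTWb : ∀ y : ℋ, ‖χb ((H - T) (Tinv (χb y)))‖ ≤ c₂ * ‖y‖)
    (C : ℝ)
    (hTWc : ∀ x ∈ D, ‖Tinv (χb ((H - T) (χ x)))‖ ≤ C * ‖x‖) :
    ∃ R : ℋ →L[ℂ] ℋ,
      (∀ y ∈ Set.range χb, R y ∈ D ∧ R y ∈ Set.range χb ∧
          T (R y) + χb ((H - T) (χb (R y))) = y) ∧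
      (∀ x, x ∈ D → x ∈ Set.range χb →
          R (T x + χb ((H - T) (χb x))) = x) ∧
      ∃ C' : ℝ, ∀ x ∈ D, ‖χb (R (χb ((H - T) (χ x))))‖ ≤ C' * ‖x‖ := by
  classical
  -- χb and Tinv commute on Ran χb
  have key : ∀ z ∈ Set.range χb, χb (Tinv z) = Tinv (χb z) := by
    intro z hz
    obtain ⟨hzD, hzR, hzT⟩ := hTinv₁ z hz
    have h1 : χb z = T (χb (Tinv z)) := by
      conv_lhs => rw [← hzT]
      exact hχbT _ hzD
    rw [h1, hTinv₂ _ (hχbD _ hzD) ⟨Tinv z, rfl⟩]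
  -- the bounded operator B = χb W Tinv χb
  set Blin : ℋ →ₗ[ℂ] ℋ :=
    (χb : ℋ →ₗ[ℂ] ℋ) ∘ₗ (H - T) ∘ₗ (Tinv : ℋ →ₗ[ℂ] ℋ) ∘ₗ (χb : ℋ →ₗ[ℂ] ℋ) with hBlin
  have hBlin_bound : ∀ y : ℋ, ‖Blin y‖ ≤ max c₂ 0 * ‖y‖ := by
    intro y
    have h1 : ‖Blin y‖ ≤ c₂ * ‖y‖ := hTWb y
    have h2 : c₂ * ‖y‖ ≤ max c₂ 0 * ‖y‖ :=
      mul_le_mul_of_nonneg_right (le_max_left _ _) (norm_nonneg _)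
    linarith
  set B : ℋ →L[ℂ] ℋ := Blin.mkContinuous (max c₂ 0) hBlin_bound with hBdef
  have hBapp : ∀ y : ℋ, B y = χb ((H - T) (Tinv (χb y))) := fun y => rfl
  have hBnorm : ‖B‖ < 1 := by
    have h1 : ‖B‖ ≤ max c₂ 0 :=
      ContinuousLinearMap.opNorm_le_bound _ (le_max_right _ _) hBlin_bound
    exact lt_of_le_of_lt h1 (max_lt hc₂ one_pos)
  -- the Neumann inverse of 1 + B
  have hnB : ‖-B‖ < 1 := by rwa [norm_neg]
  set u : (ℋ →L[ℂ] ℋ)ˣ := Units.oneSub (-B) hnB with hu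
  set S : ℋ →L[ℂ] ℋ := ↑u⁻¹ with hS
  have hS1 : ∀ y : ℋ, S y + B (S y) = y := by
    intro y
    have h := DFunLike.congr_fun u.mul_inv y
    have h2 : ((1 - -B) * ↑u⁻¹) y = (1 : ℋ →L[ℂ] ℋ) y := h
    simpa [ContinuousLinearMap.mul_apply, ContinuousLinearMap.sub_apply,
      ContinuousLinearMap.neg_apply, ContinuousLinearMap.one_apply,
      sub_neg_eq_add] using h2
  have hS2 : ∀ y : ℋ, S (y + B y) = y := by
    intro y
    have h := DFunLike.congr_fun u.inv_mul y
    have h2 : (↑u⁻¹ * (1 - -B)) y = (1 : ℋ →L[ℂ] ℋ) y := h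
    simpa [ContinuousLinearMap.mul_apply, ContinuousLinearMap.sub_apply,
      ContinuousLinearMap.neg_apply, ContinuousLinearMap.one_apply,
      sub_neg_eq_add] using h2
  refine ⟨Tinv.comp S, ?_, ?_, ?_⟩
  · -- right inverse on Ran χb
    intro y hy
    obtain ⟨v, hv⟩ := hy
    set m : ℋ := S y with hm
    have hmeq : m + B m = y := hS1 y
    have hmR : m ∈ Set.range χb := by
      refine ⟨v - ((H - T) (Tinv (χb m))), ?_⟩
      have h : m = y - B m := by
        rw [← hmeq]; abel
      rw [map_sub, hv, ← hBapp]
      exact h.symm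
    obtain ⟨hmD', hmR', hmT⟩ := hTinv₁ m hmR
    have hRy : (Tinv.comp S) y = Tinv m := rfl
    refine ⟨by rw [hRy]; exact hmD', by rw [hRy]; exact hmR', ?_⟩
    rw [hRy, hmT, key m hmR, ← hBapp, hmeq]
  · -- left inverse on D ∩ Ran χb
    intro x hxD hxR
    have h1 : χb ((H - T) (χb x)) = B (T x) := by
      rw [hBapp, hχbT x hxD, hTinv₂ (χb x) (hχbD x hxD) ⟨x, rfl⟩]
    rw [h1]
    have h2 : (Tinv.comp S) (T x + B (T x)) = Tinv (S (T x + B (T x))) := rfl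
    rw [h2, hS2]
    exact hTinv₂ x hxD hxR
  · -- boundedness of χb H_χb⁻¹ χb W χ
    refine ⟨‖χb‖ * C / (1 - c₁), ?_⟩
    intro x hx
    set g : ℋ := χb ((H - T) (χ x)) with hg
    have hgR : g ∈ Set.range χb := ⟨(H - T) (χ x), rfl⟩
    set z : ℋ := S g with hz
    have hzeq : z + B z = g := hS1 g
    have hzR : z ∈ Set.range χb := by
      obtain ⟨w, hw⟩ := hgR
      refine ⟨w - ((H - T) (Tinv (χb z))), ?_⟩
      have h : z = g - B z := by rw [← hzeq]; abel
      rw [map_sub, hw, ← hBapp]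
      exact h.symm
    obtain ⟨hzD', hzR', hzT⟩ := hTinv₁ z hzR
    set t : ℋ := Tinv z with ht
    have hRg : (Tinv.comp S) g = t := rfl
    -- t = Tinv g - Tinv (B z), with ‖Tinv (B z)‖ ≤ c₁ ‖t‖
    have h3 : t = Tinv g - Tinv (B z) := by
      have h : z = g - B z := by rw [← hzeq]; abel
      rw [ht]
      conv_lhs => rw [h]
      exact map_sub Tinv g (B z)
    have h4 : ‖Tinv (B z)‖ ≤ c₁ * ‖t‖ := by
      have h5 : B z = χb ((H - T) (χb t)) := by
        rw [hBapp, key z hzR]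
      rw [h5]
      exact hTWa t hzD'
    have h6 : ‖Tinv g‖ ≤ C * ‖x‖ := hTWc x hx
    have h7 : ‖t‖ ≤ C * ‖x‖ + c₁ * ‖t‖ := by
      calc ‖t‖ = ‖Tinv g - Tinv (B z)‖ := by rw [← h3]
        _ ≤ ‖Tinv g‖ + ‖Tinv (B z)‖ := norm_sub_le _ _
        _ ≤ C * ‖x‖ + c₁ * ‖t‖ := add_le_add h6 h4
    have hden : (0 : ℝ) < 1 - c₁ := by linarith
    have h8 : ‖t‖ ≤ C * ‖x‖ / (1 - c₁) := by
      rw [le_div_iff₀ hden]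
      nlinarith [norm_nonneg t]
    calc ‖χb ((Tinv.comp S) g)‖ = ‖χb t‖ := by rw [hRg]
      _ ≤ ‖χb‖ * ‖t‖ := χb.le_opNorm t
      _ ≤ ‖χb‖ * (C * ‖x‖ / (1 - c₁)) :=
          mul_le_mul_of_nonneg_left h8 (norm_nonneg _)
      _ = ‖χb‖ * C / (1 - c₁) * ‖x‖ := by ring
end

section
/- Fix ρ ∈ (0, 4/5), α₀ < ρ/2, and an open set U₀ ⊆ ℂ containing the closed ball B̄(E_at, ρ). Let E⁽⁰⁾ : U₀ → ℂ be analytic with |E⁽⁰⁾(z) − (E_at − z)| ≤ α₀ for all z ∈ U₀. Then for every w with |w| < ρ/2 + ε (ε > 0 small enough that α₀ + ρ/2 + ε < ρ), the function z ↦ E⁽⁰⁾(z) − w has exactly one zero in B(E_at, ρ); consequently E⁽⁰⁾ restricts to a conformal bijection from U₁ := {z ∈ U₀ : |E⁽⁰⁾(z)| ≤ ρ/2} onto the closed disc D_{ρ/2}, and U₁ ⊂ B(E_at, ρ). -/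
/-!
Rouché's theorem via Jensen's formula. If `‖f - g‖ < ‖g‖` on the annulus `r ≤ ‖z - c‖ ≤ R`, then
`f / g` takes values in the disc `B(1, 1)` there, so `log ‖f‖ - log ‖g‖` is the real part of a
holomorphic logarithm on the annulus and has the same circle averages at radii `r` and `R`. By
Jensen's formula the circle average of `log ‖f‖` increases from radius `r` to radius `R` by
`N * log (R / r)`, where `N` is the number of zeros of `f` in the ball counted with multiplicity;
hence `f` and `g` have equally many zeros.

For `f z = w - E⁽⁰⁾ z` and `g z = z - (E_at - w)` the hypothesis holds on every annulus with
`α₀ + ‖w‖ < r ≤ ρ`, and `g` has a single simple zero, so `E⁽⁰⁾ = w` has exactly one solution in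
`B(E_at, ρ)` as soon as `α₀ + ‖w‖ < ρ`. All remaining claims follow from this.
-/

open Metric Set Real
open MeromorphicOn (divisor)

theorem circleAverage_eq_of_differentiableAt_annulus {E : Type*} [NormedAddCommGroup E]
    [NormedSpace ℂ E] {c : ℂ} {r R : ℝ} {f : ℂ → E} (hr : 0 < r) (hrR : r ≤ R)
    (hf : ∀ z ∈ closedBall c R \ ball c r, DifferentiableAt ℂ f z) :
    circleAverage f c R = circleAverage f c r := by
  rw [circleAverage_eq_circleIntegral (hr.trans_le hrR).ne',
    circleAverage_eq_circleIntegral hr.ne',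
    Complex.circleIntegral_sub_center_inv_smul_eq_of_differentiable_on_annulus_off_countable hr hrR
      countable_empty (fun z hz => (hf z hz).continuousAt.continuousWithinAt)
      fun z hz => hf z ⟨ball_subset_closedBall hz.1.1, fun h => hz.1.2 (ball_subset_closedBall h)⟩]

theorem ne_zero_of_norm_sub_lt_norm {E : Type*} [SeminormedAddCommGroup E] {a b : E}
    (h : ‖a - b‖ < ‖b‖) : a ≠ 0 := fun ha => h.ne (by rw [ha, zero_sub, norm_neg])

theorem circleAverage_log_norm_sub_eq_of_norm_sub_lt {c : ℂ} {r R : ℝ} {f g : ℂ → ℂ}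
    (hr : 0 < r) (hrR : r ≤ R)
    (hf : ∀ z ∈ closedBall c R \ ball c r, DifferentiableAt ℂ f z)
    (hg : ∀ z ∈ closedBall c R \ ball c r, DifferentiableAt ℂ g z)
    (hfg : ∀ z ∈ closedBall c R \ ball c r, ‖f z - g z‖ < ‖g z‖) :
    circleAverage (fun z => Real.log ‖f z‖) c R - circleAverage (fun z => Real.log ‖g z‖) c R =
      circleAverage (fun z => Real.log ‖f z‖) c r -
        circleAverage (fun z => Real.log ‖g z‖) c r := by
  set A := closedBall c R \ ball c r
  have hf0 : ∀ z ∈ A, f z ≠ 0 := fun z hz => ne_zero_of_norm_sub_lt_norm (hfg z hz)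
  have hg0 : ∀ z ∈ A, g z ≠ 0 := fun z hz => norm_pos_iff.1 ((norm_nonneg _).trans_lt (hfg z hz))
  have hslit : ∀ z ∈ A, f z / g z ∈ Complex.slitPlane := fun z hz => by
    have h : ‖f z / g z - 1‖ < 1 := by
      rw [div_sub_one (hg0 z hz), norm_div, div_lt_one (norm_pos_iff.2 (hg0 z hz))]
      exact hfg z hz
    simpa using Complex.mem_slitPlane_of_norm_lt_one h
  have hL : ∀ z ∈ A, DifferentiableAt ℂ (fun z => Complex.log (f z / g z)) z := fun z hz =>
    ((hf z hz).div (hg z hz) (hg0 z hz)).clog (hslit z hz)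
  have hre : ∀ s, r ≤ s → s ≤ R →
      circleAverage (fun z => Real.log ‖f z‖) c s - circleAverage (fun z => Real.log ‖g z‖) c s =
        (circleAverage (fun z => Complex.log (f z / g z)) c s).re := by
    intro s hrs hsR
    have hsA : sphere c s ⊆ A := closedBall_sdiff_ball.symm.subset.trans
      (sdiff_subset_sdiff (closedBall_subset_closedBall hsR) (ball_subset_ball hrs))
    have hs : 0 ≤ s := hr.le.trans hrs
    have hint : ∀ h : ℂ → ℂ, (∀ z ∈ A, DifferentiableAt ℂ h z) → (∀ z ∈ A, h z ≠ 0) →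
        CircleIntegrable (fun z => Real.log ‖h z‖) c s := fun h hd h0 =>
      ContinuousOn.circleIntegrable hs fun z hz => ContinuousAt.continuousWithinAt <|
        (hd z (hsA hz)).continuousAt.norm.log (norm_ne_zero_iff.2 (h0 z (hsA hz)))
    rw [← circleAverage_sub (hint f hf hf0) (hint g hg hg0), ← Complex.reCLM_apply,
      ← ContinuousLinearMap.circleAverage_comp_comm _ (ContinuousOn.circleIntegrable hs
        fun z hz => (hL z (hsA hz)).continuousAt.continuousWithinAt)]
    refine circleAverage_congr_sphere fun z hz => ?_
    rw [abs_of_nonneg hs] at hz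
    simp [Complex.log_re,
      Real.log_div (norm_ne_zero_iff.2 (hf0 z (hsA hz))) (norm_ne_zero_iff.2 (hg0 z (hsA hz)))]
  rw [hre R hrR le_rfl, hre r le_rfl hrR, circleAverage_eq_of_differentiableAt_annulus hr hrR hL]

theorem AnalyticOnNhd.divisor_closedBall_apply_eq {c : ℂ} {r R : ℝ} {f : ℂ → ℂ}
    (hrR : r ≤ R) (hf : AnalyticOnNhd ℂ f (closedBall c R))
    (hf0 : ∀ z ∈ closedBall c R \ ball c r, f z ≠ 0) (u : ℂ) :
    divisor f (closedBall c r) u = divisor f (closedBall c R) u := by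
  by_cases hu : u ∈ closedBall c r
  · rw [← MeromorphicOn.divisor_restrict hf.meromorphicOn (closedBall_subset_closedBall hrR),
      Function.locallyFinsuppWithin.restrict_apply, if_pos hu]
  by_cases huR : u ∈ closedBall c R
  · rw [Function.locallyFinsuppWithin.apply_eq_zero_of_notMem _ hu,
      MeromorphicOn.AnalyticOnNhd.divisor_apply hf huR,
      (hf u huR).analyticOrderAt_eq_zero.2 (hf0 u ⟨huR, fun h => hu (ball_subset_closedBall h)⟩)]
    rfl
  · simp [hu, huR]

theorem AnalyticOnNhd.circleAverage_log_norm_sub_circleAverage {c : ℂ} {r R : ℝ} {f : ℂ → ℂ}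
    (hr : 0 < r) (hrR : r ≤ R) (hf : AnalyticOnNhd ℂ f (closedBall c R))
    (hf0 : ∀ z ∈ closedBall c R \ ball c r, f z ≠ 0) :
    circleAverage (fun z => Real.log ‖f z‖) c R - circleAverage (fun z => Real.log ‖f z‖) c r =
      ((∑ᶠ u, divisor f (closedBall c R) u : ℤ) : ℝ) * (Real.log R - Real.log r) := by
  have jensen : ∀ s, 0 < s → s ≤ R → circleAverage (fun z => Real.log ‖f z‖) c s =
      ∑ᶠ u, divisor f (closedBall c s) u * (Real.log s - Real.log ‖c - u‖) +
        Real.log ‖meromorphicTrailingCoeffAt f c‖ := by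
    intro s hs hsR
    have hfs : MeromorphicOn f (closedBall c |s|) := by
      rw [abs_of_pos hs]
      exact (hf.mono (closedBall_subset_closedBall hsR)).meromorphicOn
    have h := hfs.circleAverage_log_norm hs.ne'
    rw [abs_of_pos hs] at h
    rw [h, countingFunction_finsum_eq_finsum_add hs.ne'
      ((divisor f _).finiteSupport (isCompact_closedBall c s))]
  set D := divisor f (closedBall c R)
  have hD : D.support.Finite := D.finiteSupport (isCompact_closedBall c R)
  rw [jensen R (hr.trans_le hrR) le_rfl, jensen r hr hrR]
  simp only [hf.divisor_closedBall_apply_eq hrR hf0]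
  have hfin : ∀ x : ℝ, (fun u => (D u : ℝ) * (x - Real.log ‖c - u‖)).HasFiniteSupport :=
    fun x => hD.subset fun u hu h => hu (by simp [h])
  have hcast : ((∑ᶠ u, D u : ℤ) : ℝ) = ∑ᶠ u, (D u : ℝ) := (Int.castAddHom ℝ).map_finsum hD
  rw [add_sub_add_right_eq_sub, ← finsum_sub_distrib (hfin _) (hfin _), hcast, finsum_mul]
  exact finsum_congr fun u => by ring

theorem AnalyticOnNhd.finsum_divisor_eq_of_norm_sub_lt {c : ℂ} {r R : ℝ} {f g : ℂ → ℂ}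
    (hr : 0 < r) (hrR : r < R) (hf : AnalyticOnNhd ℂ f (closedBall c R))
    (hg : AnalyticOnNhd ℂ g (closedBall c R))
    (hfg : ∀ z ∈ closedBall c R \ ball c r, ‖f z - g z‖ < ‖g z‖) :
    ∑ᶠ u, divisor f (closedBall c R) u = ∑ᶠ u, divisor g (closedBall c R) u := by
  have hf0 : ∀ z ∈ closedBall c R \ ball c r, f z ≠ 0 := fun z hz =>
    ne_zero_of_norm_sub_lt_norm (hfg z hz)
  have hg0 : ∀ z ∈ closedBall c R \ ball c r, g z ≠ 0 := fun z hz =>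
    norm_pos_iff.1 ((norm_nonneg _).trans_lt (hfg z hz))
  have hharm := circleAverage_log_norm_sub_eq_of_norm_sub_lt hr hrR.le
    (fun z hz => (hf z hz.1).differentiableAt) (fun z hz => (hg z hz.1).differentiableAt) hfg
  have hjf := hf.circleAverage_log_norm_sub_circleAverage hr hrR.le hf0
  have hjg := hg.circleAverage_log_norm_sub_circleAverage hr hrR.le hg0
  have hlog : Real.log R - Real.log r ≠ 0 := (sub_pos.2 (Real.log_lt_log hr hrR)).ne'
  have h : ((∑ᶠ u, divisor f (closedBall c R) u : ℤ) : ℝ) =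
      ((∑ᶠ u, divisor g (closedBall c R) u : ℤ) : ℝ) :=
    mul_right_cancel₀ hlog (by linarith)
  exact_mod_cast h

theorem MeromorphicOn.finsum_divisor_sub_const {𝕜 : Type*} [NontriviallyNormedField 𝕜]
    {a : 𝕜} {U : Set 𝕜} (ha : a ∈ U) : ∑ᶠ u, divisor (· - a) U u = 1 := by
  rw [finsum_eq_single _ a fun u hu => divisor_sub_const_of_ne hu]
  exact divisor_sub_const_self ha

theorem AnalyticOnNhd.existsUnique_zero_of_finsum_divisor_eq_one {U : Set ℂ} {f : ℂ → ℂ}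
    (hU : IsCompact U) (hf : AnalyticOnNhd ℂ f U) (htop : ∀ z ∈ U, analyticOrderAt f z ≠ ⊤)
    (h : ∑ᶠ u, divisor f U u = 1) : ∃! z, z ∈ U ∧ f z = 0 := by
  set D := divisor f U
  have hD : D.support.Finite := D.finiteSupport hU
  have hpos : ∀ z, 0 < D z ↔ z ∈ U ∧ f z = 0 := by
    intro z
    by_cases hz : z ∈ U
    · obtain ⟨n, hn⟩ := ENat.ne_top_iff_exists.1 (htop z hz)
      have h0 := (hf z hz).analyticOrderAt_eq_zero
      rw [← hn, Nat.cast_eq_zero] at h0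
      simpa [D, MeromorphicOn.AnalyticOnNhd.divisor_apply hf hz, ← hn, hz, Nat.pos_iff_ne_zero]
        using (not_congr h0).trans not_not
    · simp [D, hz]
  have hnonneg : 0 ≤ D := MeromorphicOn.AnalyticOnNhd.divisor_nonneg hf
  obtain ⟨z, hz⟩ : ∃ z, D z ≠ 0 := by
    by_contra! hzero
    rw [finsum_eq_zero_of_forall_eq_zero hzero] at h
    exact zero_ne_one h
  have hzpos : 0 < D z := (hnonneg z).lt_of_ne' hz
  refine ⟨z, (hpos z).1 hzpos, fun y hy => ?_⟩
  by_contra hyz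
  have hpair : D y + D z ≤ ∑ᶠ u, D u := by
    rw [finsum_eq_sum D hD, ← Finset.sum_pair hyz]
    exact Finset.sum_le_sum_of_subset_of_nonneg
      (by simp [Set.insert_subset_iff, hz, ((hpos y).2 hy).ne']) fun u _ _ => hnonneg u
  linarith [(hpos y).2 hy]

theorem dist_le_add_norm_of_norm_sub_le {F : ℂ → ℂ} {a z : ℂ} {α : ℝ}
    (h : ‖F z - (a - z)‖ ≤ α) : dist z a ≤ α + ‖F z‖ := by
  rw [dist_eq_norm, ← norm_neg, neg_sub]
  calc ‖a - z‖ = ‖F z - (F z - (a - z))‖ := by rw [sub_sub_cancel]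
    _ ≤ ‖F z‖ + ‖F z - (a - z)‖ := norm_sub_le _ _
    _ ≤ α + ‖F z‖ := by linarith

theorem existsUnique_mem_ball_eq_of_norm_sub_le {F : ℂ → ℂ} {a w : ℂ} {ρ α : ℝ} (hα : 0 ≤ α)
    (hF : AnalyticOnNhd ℂ F (closedBall a ρ))
    (hbound : ∀ z ∈ closedBall a ρ, ‖F z - (a - z)‖ ≤ α) (hw : α + ‖w‖ < ρ) :
    ∃! z, z ∈ ball a ρ ∧ F z = w := by
  obtain ⟨r, hr, hwr, hrρ⟩ : ∃ r, 0 < r ∧ α + ‖w‖ < r ∧ r < ρ :=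
    ⟨(α + ‖w‖ + ρ) / 2, by linarith [norm_nonneg w], by linarith, by linarith⟩
  set f := fun z => w - F z
  set g := fun z => z - (a - w)
  have hf : AnalyticOnNhd ℂ f (closedBall a ρ) := fun z hz => analyticAt_const.sub (hF z hz)
  have hg : AnalyticOnNhd ℂ g (closedBall a ρ) := fun z _ => analyticAt_id.sub analyticAt_const
  have hfg : ∀ z ∈ closedBall a ρ \ ball a r, ‖f z - g z‖ < ‖g z‖ := by
    rintro z ⟨hz, hzr⟩
    have hzr : r ≤ ‖z - a‖ := by simpa [dist_eq_norm] using hzr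
    calc ‖f z - g z‖ = ‖F z - (a - z)‖ := by rw [← norm_neg]; congr 1; simp only [f, g]; ring
      _ < ‖z - a‖ - ‖w‖ := by linarith [hbound z hz]
      _ ≤ ‖g z‖ := by
        simpa [g, sub_sub_eq_add_sub, add_sub_right_comm] using norm_sub_norm_le (z - a) (-w)
  have hcount : ∑ᶠ u, divisor f (closedBall a ρ) u = 1 := by
    rw [hf.finsum_divisor_eq_of_norm_sub_lt hr hrρ hg hfg]
    refine MeromorphicOn.finsum_divisor_sub_const ?_
    rw [mem_closedBall, dist_eq_norm, sub_sub_cancel_left, norm_neg]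
    linarith
  have hedge : a + ρ ∈ closedBall a ρ \ ball a r := by
    simp [dist_eq_norm, abs_of_pos (hr.trans hrρ), hrρ.le]
  have htop : ∀ z ∈ closedBall a ρ, analyticOrderAt f z ≠ ⊤ := fun z hz =>
    hf.analyticOrderAt_ne_top_of_isPreconnected (convex_closedBall a ρ).isPreconnected hedge.1 hz
      (by rw [(hf _ hedge.1).analyticOrderAt_eq_zero.2 (ne_zero_of_norm_sub_lt_norm (hfg _ hedge))]
          exact ENat.zero_ne_top)
  obtain ⟨z, ⟨hz, hfz⟩, huniq⟩ :=
    hf.existsUnique_zero_of_finsum_divisor_eq_one (isCompact_closedBall a ρ) htop hcount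
  have hFz : F z = w := (sub_eq_zero.1 hfz).symm
  refine ⟨z, ⟨mem_ball.2 ?_, hFz⟩, fun y ⟨hy, hFy⟩ => huniq y ⟨ball_subset_closedBall hy, ?_⟩⟩
  · linarith [hFz ▸ dist_le_add_norm_of_norm_sub_le (hbound z hz)]
  · simp [f, hFy]

theorem Set.bijOn_inter_preimage_of_existsUnique {α β : Type*} {f : α → β} {s : Set α}
    {t : Set β} (h : ∀ y ∈ t, ∃! x, x ∈ s ∧ f x = y) : BijOn f (s ∩ f ⁻¹' t) t := by
  refine ⟨fun x hx => hx.2, fun x₁ hx₁ x₂ hx₂ hf => ?_, fun y hy => ?_⟩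
  · obtain ⟨x, -, hx⟩ := h _ hx₁.2
    exact (hx x₁ ⟨hx₁.1, rfl⟩).trans (hx x₂ ⟨hx₂.1, hf.symm⟩).symm
  · obtain ⟨x, ⟨hxs, hxy⟩, -⟩ := h y hy
    exact ⟨x, ⟨hxs, by rwa [mem_preimage, hxy]⟩, hxy⟩

theorem rouche_conformal_step_general
    (ρ : ℝ)
    (α₀ : ℝ) (hα₀ : 0 ≤ α₀) (hα₀ρ : α₀ < ρ / 2)
    (U₀ : Set ℂ)
    (Eat : ℂ) (hball : closedBall Eat ρ ⊆ U₀)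
    (E0 : ℂ → ℂ) (hE0 : AnalyticOnNhd ℂ E0 U₀)
    (hbound : ∀ z ∈ U₀, ‖E0 z - (Eat - z)‖ ≤ α₀) :
    (∀ ε > (0 : ℝ), α₀ + ρ / 2 + ε < ρ →
      ∀ w : ℂ, ‖w‖ < ρ / 2 + ε →
        ∃! z : ℂ, z ∈ ball Eat ρ ∧ E0 z = w) ∧
    {z ∈ U₀ | ‖E0 z‖ ≤ ρ / 2} ⊆ ball Eat ρ ∧
    Set.BijOn E0 {z ∈ U₀ | ‖E0 z‖ ≤ ρ / 2} (closedBall 0 (ρ / 2)) ∧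
    ∃ U V : Set ℂ, IsOpen U ∧ IsOpen V ∧
      {z ∈ U₀ | ‖E0 z‖ ≤ ρ / 2} ⊆ U ∧ U ⊆ U₀ ∧
      closedBall 0 (ρ / 2) ⊆ V ∧ Set.BijOn E0 U V := by
  have key : ∀ w, ‖w‖ < ρ - α₀ → ∃! z, z ∈ ball Eat ρ ∧ E0 z = w := fun w hw =>
    existsUnique_mem_ball_eq_of_norm_sub_le hα₀ (hE0.mono hball)
      (fun z hz => hbound z (hball hz)) (by linarith)
  have hballU₀ : ball Eat ρ ⊆ U₀ := ball_subset_closedBall.trans hball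
  have hU₁ : {z ∈ U₀ | ‖E0 z‖ ≤ ρ / 2} = ball Eat ρ ∩ E0 ⁻¹' closedBall 0 (ρ / 2) := by
    ext z
    simp only [mem_ofPred_eq, mem_inter_iff, mem_preimage, mem_closedBall_zero_iff]
    refine ⟨fun ⟨hz, hE⟩ => ⟨?_, hE⟩, fun ⟨hz, hE⟩ => ⟨hballU₀ hz, hE⟩⟩
    exact mem_ball.2 ((dist_le_add_norm_of_norm_sub_le (hbound z hz)).trans_lt (by linarith))
  refine ⟨fun ε _ hε w hw => key w (by linarith), hU₁ ▸ inter_subset_left, ?_,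
    ball Eat ρ ∩ E0 ⁻¹' ball 0 (ρ - α₀), ball 0 (ρ - α₀),
    (hE0.continuousOn.mono hballU₀).isOpen_inter_preimage isOpen_ball isOpen_ball, isOpen_ball,
    hU₁ ▸ inter_subset_inter_right _ (preimage_mono (closedBall_subset_ball (by linarith))),
    inter_subset_left.trans hballU₀, closedBall_subset_ball (by linarith), ?_⟩
  · rw [hU₁]
    exact bijOn_inter_preimage_of_existsUnique fun w hw =>
      key w ((mem_closedBall_zero_iff.1 hw).trans_lt (by linarith))
  · exact bijOn_inter_preimage_of_existsUnique fun w hw => key w (mem_ball_zero_iff.1 hw)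

/-- **First step of the conformality argument (Rouché).**
Fix `ρ ∈ (0, 4/5)`, `0 ≤ α₀ < ρ/2`, an open `U₀ ⊆ ℂ` containing the closed
ball `B̄(E_at, ρ)`, and `E⁽⁰⁾ : U₀ → ℂ` analytic with
`|E⁽⁰⁾(z) − (E_at − z)| ≤ α₀` on `U₀`.  Then for every `ε > 0` with
`α₀ + ρ/2 + ε < ρ` and every `w` with `|w| < ρ/2 + ε`, the function
`z ↦ E⁽⁰⁾(z) − w` has exactly one zero in `B(E_at, ρ)`; consequently
`U₁ = {z ∈ U₀ : |E⁽⁰⁾(z)| ≤ ρ/2} ⊂ B(E_at, ρ)` and `E⁽⁰⁾` restricts to a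
conformal bijection from `U₁` onto the closed disc `D_{ρ/2}`. -/
theorem rouche_conformal_step
    (ρ : ℝ) (hρ₀ : 0 < ρ) (hρ₁ : ρ < 4 / 5)
    (α₀ : ℝ) (hα₀ : 0 ≤ α₀) (hα₀ρ : α₀ < ρ / 2)
    (U₀ : Set ℂ) (hU₀ : IsOpen U₀)
    (Eat : ℂ) (hball : closedBall Eat ρ ⊆ U₀)
    (E0 : ℂ → ℂ) (hE0 : AnalyticOnNhd ℂ E0 U₀)
    (hbound : ∀ z ∈ U₀, ‖E0 z - (Eat - z)‖ ≤ α₀) :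
    (∀ ε > (0 : ℝ), α₀ + ρ / 2 + ε < ρ →
      ∀ w : ℂ, ‖w‖ < ρ / 2 + ε →
        ∃! z : ℂ, z ∈ ball Eat ρ ∧ E0 z = w) ∧
    {z ∈ U₀ | ‖E0 z‖ ≤ ρ / 2} ⊆ ball Eat ρ ∧
    Set.BijOn E0 {z ∈ U₀ | ‖E0 z‖ ≤ ρ / 2} (closedBall 0 (ρ / 2)) ∧
    ∃ U V : Set ℂ, IsOpen U ∧ IsOpen V ∧
      {z ∈ U₀ | ‖E0 z‖ ≤ ρ / 2} ⊆ U ∧ U ⊆ U₀ ∧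
      closedBall 0 (ρ / 2) ⊆ V ∧ Set.BijOn E0 U V :=
  rouche_conformal_step_general ρ α₀ hα₀ hα₀ρ U₀ Eat hball E0 hE0 hbound
end

section
/- Let ρ ∈ (0,1) and let Tⁿ : [0,1] → ℂ, n ≥ 0, satisfy the recursion Tⁿ(r) = ρ⁻¹ Tⁿ⁻¹(ρr) + eⁿ⁻¹(r) with Tⁿ(0) = 0 = eⁿ(0), where T⁰ is C¹ and each eⁿ is C¹ with sup_{r∈[0,1]}(|eⁿ(r)| + |(eⁿ)′(r)|) ≤ Cγₙ² and Σγₙ² < ∞. Then Tⁿ(r) → λr uniformly on [0,1] as n → ∞, where λ = (T⁰)′(0) + Σ_{k=0}^∞ (eᵏ)′(0). -/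
/-!
Unrolling the recursion writes `Tⁿ` as the rescaling `ρ⁻ⁿ T⁰(ρⁿ ·)` plus the sum over `k < n` of
the rescalings `ρ^{-(n-1-k)} eᵏ(ρ^{n-1-k} ·)`. A rescaling `c⁻¹ f(c ·)` of a function vanishing
at `0` converges uniformly on `[0,1]` to `r ↦ r f′(0)` as `c → 0⁺`, and by the mean value theorem
it is bounded by `sup |f′|`, which for `eᵏ` is at most `C γₖ²`. A version of Tannery's theorem
that is uniform in `r` then lets the limit pass through the sum.
-/

open Filter Topology Set

theorem tendstoUniformlyOn_finsetSum {α β X G : Type*} [UniformSpace G] [AddCommGroup G]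
    [IsUniformAddGroup G] {l : Filter α} {s : Set X} {f : α → β → X → G} {g : β → X → G} (T : Finset β)
    (hfg : ∀ k ∈ T, TendstoUniformlyOn (f · k) (g k) l s) :
    TendstoUniformlyOn (fun n x => ∑ k ∈ T, f n k x) (fun x => ∑ k ∈ T, g k x) l s := by
  classical
  induction T using Finset.induction_on with
  | empty => simpa using (tendsto_const_nhds (x := (0 : G)) (f := l)).tendstoUniformlyOn_const s
  | insert a T ha ih =>
    simp only [Finset.sum_insert ha]
    exact (hfg a (Finset.mem_insert_self a T)).add
      (ih fun k hk => hfg k (Finset.mem_insert_of_mem hk))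

theorem tendstoUniformlyOn_tsum_of_dominated {α β X G : Type*} [NormedAddCommGroup G]
    [CompleteSpace G] {l : Filter α} {s : Set X} {f : α → β → X → G} {g : β → X → G}
    {bound : β → ℝ} (h_sum : Summable bound)
    (hfg : ∀ k, TendstoUniformlyOn (f · k) (g k) l s)
    (h_bound : ∀ᶠ n in l, ∀ k, ∀ x ∈ s, ‖f n k x‖ ≤ bound k) :
    TendstoUniformlyOn (fun n x => ∑' k, f n k x) (fun x => ∑' k, g k x) l s := by
  rcases l.eq_or_neBot with rfl | _
  · exact fun _ _ => eventually_bot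
  have h_g (k : β) (x : X) (hx : x ∈ s) : ‖g k x‖ ≤ bound k :=
    le_of_tendsto (tendsto_norm.comp ((hfg k).tendsto_at hx)) (h_bound.mono fun n h => h k x hx)
  rw [Metric.tendstoUniformlyOn_iff]
  intro ε hε
  obtain ⟨T, hT⟩ : ∃ T : Finset β, ∑' k : {k // k ∉ T}, bound k < ε / 3 :=
    ((tendsto_tsum_compl_atTop_zero bound).eventually (gt_mem_nhds (by positivity))).exists
  have hhead := Metric.tendstoUniformlyOn_iff.mp
    (tendstoUniformlyOn_finsetSum T fun k _ => hfg k) (ε / 3) (by positivity)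
  filter_upwards [hhead, h_bound] with n hn hb x hx
  have hfs : Summable (f n · x) := h_sum.of_norm_bounded (hb · x hx)
  have hgs : Summable (g · x) := h_sum.of_norm_bounded (h_g · x hx)
  have htail : ‖∑' k : {k // k ∉ T}, (g k x - f n k x)‖ ≤ 2 * ∑' k : {k // k ∉ T}, bound k :=
    tsum_of_norm_bounded ((h_sum.subtype _).hasSum.mul_left 2) fun k =>
      (norm_sub_le _ _).trans (by rw [Function.comp_apply]; linarith [h_g k x hx, hb k x hx])
  rw [dist_eq_norm, ← hgs.tsum_sub hfs, ← (hgs.sub hfs).sum_add_tsum_compl (s := T),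
    Finset.sum_sub_distrib]
  calc _ ≤ ‖∑ k ∈ T, g k x - ∑ k ∈ T, f n k x‖ + ‖∑' k : {k // k ∉ T}, (g k x - f n k x)‖ :=
        norm_add_le _ _
    _ < ε / 3 + 2 * (ε / 3) := by
        rw [← dist_eq_norm]
        exact add_lt_add_of_lt_of_le (hn x hx) (htail.trans (by linarith))
    _ = ε := by ring

section Rescale

variable {E : Type*} [NormedAddCommGroup E] [NormedSpace ℝ E]

noncomputable def rescale (c : ℝ) (f : ℝ → E) (r : ℝ) : E := c⁻¹ • f (c * r)

theorem rescale_rescale (c d : ℝ) (f : ℝ → E) : rescale c (rescale d f) = rescale (d * c) f := by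
  ext r
  simp only [rescale, smul_smul, mul_inv_rev, mul_assoc]

@[simp]
theorem rescale_one (f : ℝ → E) : rescale 1 f = f := by
  ext r
  simp [rescale]

theorem norm_rescale_le {f f' : ℝ → E} {M c r : ℝ} (hf0 : f 0 = 0)
    (hf : ∀ x ∈ Icc (0 : ℝ) 1, HasDerivWithinAt f (f' x) (Icc 0 1) x)
    (hM : ∀ x ∈ Icc (0 : ℝ) 1, ‖f' x‖ ≤ M) (hc : c ∈ Ioc (0 : ℝ) 1) (hr : r ∈ Icc (0 : ℝ) 1) :
    ‖rescale c f r‖ ≤ M := by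
  obtain ⟨hc0, hc1⟩ := hc
  have hcr : c * r ∈ Icc (0 : ℝ) 1 := ⟨mul_nonneg hc0.le hr.1, mul_le_one₀ hc1 hr.1 hr.2⟩
  have hmvt : ‖f (c * r)‖ ≤ M * (c * r) := by
    simpa [hf0, abs_of_nonneg hc0.le, abs_of_nonneg hr.1] using
      (convex_Icc (0 : ℝ) 1).norm_image_sub_le_of_norm_hasDerivWithin_le hf hM
        (left_mem_Icc.mpr zero_le_one) hcr
  have hM0 : 0 ≤ M := (norm_nonneg _).trans (hM 0 (left_mem_Icc.mpr zero_le_one))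
  calc ‖rescale c f r‖ = c⁻¹ * ‖f (c * r)‖ := by
        rw [rescale, norm_smul, Real.norm_of_nonneg (inv_nonneg.mpr hc0.le)]
    _ ≤ c⁻¹ * (M * (c * r)) := by gcongr
    _ = M * r := by field_simp
    _ ≤ M := mul_le_of_le_one_right hM0 hr.2

theorem tendstoUniformlyOn_rescale {α : Type*} {l : Filter α} {c : α → ℝ} {f : ℝ → E} {L : E}
    (hf0 : f 0 = 0) (hf : HasDerivWithinAt f L (Ici 0) 0) (hc : Tendsto c l (𝓝[>] 0)) :
    TendstoUniformlyOn (fun n => rescale (c n) f) (fun r => r • L) l (Icc 0 1) := by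
  rw [Metric.tendstoUniformlyOn_iff]
  intro ε hε
  obtain ⟨δ, hδ, hsmall⟩ : ∃ δ > 0, ∀ y ∈ Ico (0 : ℝ) δ, ‖f y - y • L‖ ≤ ε / 2 * y := by
    have := (hasDerivWithinAt_iff_isLittleO.mp hf).def (half_pos hε)
    simp only [hf0, sub_zero] at this
    obtain ⟨δ, hδ, h⟩ := Metric.mem_nhdsWithin_iff.mp this
    refine ⟨δ, hδ, fun y hy => ?_⟩
    have := h ⟨by simpa [abs_of_nonneg hy.1] using hy.2, hy.1⟩
    simpa [abs_of_nonneg hy.1] using this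
  filter_upwards [hc (Ioo_mem_nhdsGT hδ)] with n ⟨hc0, hcδ⟩ r hr
  have hcr : c n * r ∈ Ico 0 δ :=
    ⟨mul_nonneg hc0.le hr.1, (mul_le_of_le_one_right hc0.le hr.2).trans_lt hcδ⟩
  have hdiff : r • L - rescale (c n) f r = (c n)⁻¹ • ((c n * r) • L - f (c n * r)) := by
    rw [rescale, smul_sub, smul_smul, inv_mul_cancel_left₀ hc0.ne']
  rw [dist_eq_norm, hdiff, norm_smul, norm_sub_rev, Real.norm_of_nonneg (inv_nonneg.mpr hc0.le)]
  calc (c n)⁻¹ * ‖f (c n * r) - (c n * r) • L‖ ≤ (c n)⁻¹ * (ε / 2 * (c n * r)) := by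
        gcongr
        exact hsmall _ hcr
    _ = ε / 2 * r := by field_simp
    _ < ε := by nlinarith [hr.2]

theorem eq_rescale_pow_add_sum_rescale_pow {c : ℝ} (hc : c ∈ Ioc (0 : ℝ) 1) {T e : ℕ → ℝ → E}
    (hrec : ∀ n, ∀ r ∈ Icc (0 : ℝ) 1, T (n + 1) r = rescale c (T n) r + e n r) (n : ℕ) :
    ∀ r ∈ Icc (0 : ℝ) 1, T n r =
      rescale (c ^ n) (T 0) r + ∑ k ∈ Finset.range n, rescale (c ^ (n - 1 - k)) (e k) r := by
  induction n with
  | zero => intro r _; simp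
  | succ n ih =>
    intro r hr
    have hcr : c * r ∈ Icc (0 : ℝ) 1 :=
      ⟨mul_nonneg hc.1.le hr.1, mul_le_one₀ hc.2 hr.1 hr.2⟩
    have hpow (m : ℕ) (f : ℝ → E) :
        c⁻¹ • rescale (c ^ m) f (c * r) = rescale (c ^ (m + 1)) f r := by
      rw [pow_succ, ← rescale_rescale]; rfl
    have hstep : T (n + 1) r = c⁻¹ • T n (c * r) + e n r := hrec n r hr
    rw [hstep, ih _ hcr, smul_add, Finset.smul_sum, hpow, Finset.sum_range_succ,
      Nat.add_sub_cancel, Nat.sub_self, pow_zero, rescale_one, add_assoc]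
    congr 2
    refine Finset.sum_congr rfl fun k hk => ?_
    rw [hpow, show n - 1 - k + 1 = n - k by have := Finset.mem_range.mp hk; omega]

theorem tendstoUniformlyOn_sum_rescale_pow [CompleteSpace E] {c : ℝ} (hc₀ : 0 < c) (hc₁ : c < 1)
    {e e' : ℕ → ℝ → E} {b : ℕ → ℝ} (he0 : ∀ k, e k 0 = 0)
    (he' : ∀ k, ∀ r ∈ Icc (0 : ℝ) 1, HasDerivWithinAt (e k) (e' k r) (Icc 0 1) r)
    (hb : ∀ k, ∀ r ∈ Icc (0 : ℝ) 1, ‖e' k r‖ ≤ b k) (hsum : Summable b) :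
    TendstoUniformlyOn (fun n r => ∑ k ∈ Finset.range n, rescale (c ^ (n - 1 - k)) (e k) r)
      (fun r => r • ∑' k, e' k 0) atTop (Icc 0 1) := by
  have h0 : (0 : ℝ) ∈ Icc (0 : ℝ) 1 := left_mem_Icc.mpr zero_le_one
  have hterm (k : ℕ) : TendstoUniformlyOn
      (fun n r => if k < n then rescale (c ^ (n - 1 - k)) (e k) r else 0)
      (fun r => r • e' k 0) atTop (Icc 0 1) := by
    have hscale : Tendsto (fun n => c ^ (n - 1 - k)) atTop (𝓝[>] 0) :=
      (tendsto_pow_atTop_nhdsWithin_zero_of_lt_one hc₀ hc₁).comp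
        ((tendsto_sub_atTop_nat k).comp (tendsto_sub_atTop_nat 1))
    refine (tendstoUniformlyOn_rescale (he0 k) ((he' k 0 h0).mono_of_mem_nhdsWithin
      (Icc_mem_nhdsGE zero_lt_one)) hscale).congr ?_
    filter_upwards [eventually_gt_atTop k] with n hn r _
    exact (if_pos hn).symm
  have hbound : ∀ n k, ∀ r ∈ Icc (0 : ℝ) 1,
      ‖if k < n then rescale (c ^ (n - 1 - k)) (e k) r else 0‖ ≤ b k := by
    intro n k r hr
    split_ifs
    · exact norm_rescale_le (he0 k) (he' k) (hb k)
        ⟨pow_pos hc₀ _, pow_le_one₀ hc₀.le hc₁.le⟩ hr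
    · exact norm_zero.trans_le ((norm_nonneg _).trans (hb k 0 h0))
  have := tendstoUniformlyOn_tsum_of_dominated hsum hterm (Eventually.of_forall hbound)
  refine (this.congr (Eventually.of_forall fun n r _ => ?_)).congr_right fun r _ => ?_
  · exact (tsum_eq_sum (s := Finset.range n) fun k hk => if_neg (by simpa using hk)).trans
      (Finset.sum_congr rfl fun k hk => if_pos (Finset.mem_range.mp hk))
  · exact tsum_const_smul'' r

theorem tendstoUniformlyOn_of_eq_rescale_add [CompleteSpace E] {c : ℝ} (hc₀ : 0 < c) (hc₁ : c < 1)
    {T e e' : ℕ → ℝ → E} {L : E} {b : ℕ → ℝ}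
    (hrec : ∀ n, ∀ r ∈ Icc (0 : ℝ) 1, T (n + 1) r = rescale c (T n) r + e n r)
    (hT0 : T 0 0 = 0) (hT0' : HasDerivWithinAt (T 0) L (Ici 0) 0) (he0 : ∀ k, e k 0 = 0)
    (he' : ∀ k, ∀ r ∈ Icc (0 : ℝ) 1, HasDerivWithinAt (e k) (e' k r) (Icc 0 1) r)
    (hb : ∀ k, ∀ r ∈ Icc (0 : ℝ) 1, ‖e' k r‖ ≤ b k) (hsum : Summable b) :
    TendstoUniformlyOn T (fun r => r • (L + ∑' k, e' k 0)) atTop (Icc 0 1) := by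
  have hhead := tendstoUniformlyOn_rescale hT0 hT0'
    (tendsto_pow_atTop_nhdsWithin_zero_of_lt_one hc₀ hc₁)
  have htail := tendstoUniformlyOn_sum_rescale_pow hc₀ hc₁ he0 he' hb hsum
  refine ((hhead.add htail).congr (Eventually.of_forall fun n r hr => ?_)).congr_right
    fun r _ => (smul_add r L _).symm
  exact (eq_rescale_pow_add_sum_rescale_pow ⟨hc₀, hc₁.le⟩ hrec n r hr).symm

end Rescale

theorem diagonal_part_converges_general
    (ρ : ℝ) (hρ₀ : 0 < ρ) (hρ₁ : ρ < 1)
    (C : ℝ)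
    (γ : ℕ → ℝ) (hγsum : Summable (fun n => γ n ^ 2))
    (T : ℕ → ℝ → ℂ) (e : ℕ → ℝ → ℂ)
    (T0' : ℝ → ℂ) (e' : ℕ → ℝ → ℂ)
    (hrec : ∀ n, ∀ r ∈ Set.Icc (0 : ℝ) 1,
        T (n + 1) r = (ρ⁻¹ : ℂ) * T n (ρ * r) + e n r)
    (hT0 : ∀ n, T n 0 = 0) (he0 : ∀ n, e n 0 = 0)
    (hT0' : ∀ r ∈ Set.Icc (0 : ℝ) 1, HasDerivAt (T 0) (T0' r) r)
    (he' : ∀ n, ∀ r ∈ Set.Icc (0 : ℝ) 1, HasDerivAt (e n) (e' n r) r)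
    (hbound : ∀ n, ∀ r ∈ Set.Icc (0 : ℝ) 1, ‖e n r‖ + ‖e' n r‖ ≤ C * γ n ^ 2) :
    TendstoUniformlyOn (fun n r => T n r)
      (fun r => (T0' 0 + ∑' k : ℕ, e' k 0) * (r : ℂ)) atTop
      (Set.Icc (0 : ℝ) 1) := by
  have hrec' (n : ℕ) (r : ℝ) (hr : r ∈ Icc (0 : ℝ) 1) :
      T (n + 1) r = rescale ρ (T n) r + e n r := by
    rw [hrec n r hr, rescale, Complex.real_smul, Complex.ofReal_inv]
  refine (tendstoUniformlyOn_of_eq_rescale_add hρ₀ hρ₁ hrec' (hT0 0)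
    (hT0' 0 (left_mem_Icc.mpr zero_le_one)).hasDerivWithinAt he0
    (fun k r hr => (he' k r hr).hasDerivWithinAt)
    (fun k r hr => (le_add_of_nonneg_left (norm_nonneg _)).trans (hbound k r hr))
    (hγsum.mul_left C)).congr_right fun r _ => Complex.real_smul.trans (mul_comm _ _)

/-- **Convergence of the diagonal part to a multiple of `H_f` (appendix,
Step 2).**  Let `ρ ∈ (0,1)` and `Tⁿ : [0,1] → ℂ` satisfy
`Tⁿ⁺¹(r) = ρ⁻¹Tⁿ(ρr) + eⁿ(r)` with `Tⁿ(0) = 0 = eⁿ(0)`, `T⁰` is `C¹` (with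
derivative `T0'`), each `eⁿ` is `C¹` (derivative `e' n`) with
`sup_{[0,1]}(|eⁿ| + |(eⁿ)′|) ≤ Cγₙ²` and `Σγₙ² < ∞`.  Then
`Tⁿ(r) → λ·r` uniformly on `[0,1]`, where
`λ = (T⁰)′(0) + Σ_{k} (eᵏ)′(0)`. -/
theorem diagonal_part_converges
    (ρ : ℝ) (hρ₀ : 0 < ρ) (hρ₁ : ρ < 1)
    (C : ℝ) (hC : 0 ≤ C)
    (γ : ℕ → ℝ) (hγ : ∀ n, 0 ≤ γ n) (hγsum : Summable (fun n => γ n ^ 2))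
    (T : ℕ → ℝ → ℂ) (e : ℕ → ℝ → ℂ)
    (T0' : ℝ → ℂ) (e' : ℕ → ℝ → ℂ)
    (hrec : ∀ n, ∀ r ∈ Set.Icc (0 : ℝ) 1,
        T (n + 1) r = (ρ⁻¹ : ℂ) * T n (ρ * r) + e n r)
    (hT0 : ∀ n, T n 0 = 0) (he0 : ∀ n, e n 0 = 0)
    (hT0' : ∀ r ∈ Set.Icc (0 : ℝ) 1, HasDerivAt (T 0) (T0' r) r)
    (he' : ∀ n, ∀ r ∈ Set.Icc (0 : ℝ) 1, HasDerivAt (e n) (e' n r) r)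
    (hbound : ∀ n, ∀ r ∈ Set.Icc (0 : ℝ) 1, ‖e n r‖ + ‖e' n r‖ ≤ C * γ n ^ 2) :
    TendstoUniformlyOn (fun n r => T n r)
      (fun r => (T0' 0 + ∑' k : ℕ, e' k 0) * (r : ℂ)) atTop
      (Set.Icc (0 : ℝ) 1) :=
  diagonal_part_converges_general ρ hρ₀ hρ₁ C γ hγsum T e T0' e' hrec hT0 he0 hT0' he' hbound
end
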